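/- First eigenvalue vanishing criterion: for a finite weighted graph G with signature s : E^{or} → U(1), λ₁(Δ_μ^s) = 0 if and only if G has a connected component on which s is balanced, i.e., the restriction of s to that component is switching equivalent to the trivial signature. -/

import Mathlib

open Finset

/-- Rayleigh quotient of `f` for the magnetic Laplacian with weights `w`,
vertex measure `μ` and signature `s` (each unordered edge counted once). -/
noncomputable def rayleigh {V : Type*} [Fintype V] (G : SimpleGraph V) [DecidableRel G.Adj]
    (w : V → V → ℝ) (μ : V → ℝ) (s : V → V → ℂ) (f : V → ℂ) : ℝ :=
  ((1 / 2) * ∑ u : V, ∑ v : V, if G.Adj u v then w u v * ‖f u - s u v * f v‖ ^ 2 else 0) /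
    (∑ u : V, ‖f u‖ ^ 2 * μ u)

/-- The first eigenvalue of the magnetic Laplacian, characterized by the
variational (min-max) principle as the infimum of Rayleigh quotients. -/
noncomputable def lam1 {V : Type*} [Fintype V] (G : SimpleGraph V) [DecidableRel G.Adj]
    (w : V → V → ℝ) (μ : V → ℝ) (s : V → V → ℂ) : ℝ :=
  sInf { x : ℝ | ∃ f : V → ℂ, f ≠ 0 ∧ x = rayleigh G w μ s f }

/-- Frustration index of `V1` with `U(1)`-valued switching functions. -/
noncomputable def frusIdx {V : Type*} [Fintype V] (G : SimpleGraph V) [DecidableRel G.Adj]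
    (w : V → V → ℝ) (s : V → V → ℂ) (V1 : Finset V) : ℝ :=
  sInf { x : ℝ | ∃ τ : V → ℂ, (∀ u, ‖τ u‖ = 1) ∧
    x = (1 / 2) * ∑ u ∈ V1, ∑ v ∈ V1, if G.Adj u v then w u v * ‖τ u - s u v * τ v‖ else 0 }

/-- Weighted boundary measure `|E(V1, V1ᶜ)|`. -/
noncomputable def bdry {V : Type*} [Fintype V] [DecidableEq V] (G : SimpleGraph V)
    [DecidableRel G.Adj] (w : V → V → ℝ) (V1 : Finset V) : ℝ :=
  ∑ u ∈ V1, ∑ v ∈ V1ᶜ, if G.Adj u v then w u v else 0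

/-- `μ`-volume of `V1`. -/
noncomputable def vol {V : Type*} [Fintype V] (μ : V → ℝ) (V1 : Finset V) : ℝ :=
  ∑ u ∈ V1, μ u

/-- The Cheeger constant `h₁ˢ(μ)`. -/
noncomputable def cheeger1 {V : Type*} [Fintype V] [DecidableEq V] (G : SimpleGraph V)
    [DecidableRel G.Adj] (w : V → V → ℝ) (μ : V → ℝ) (s : V → V → ℂ) : ℝ :=
  sInf { x : ℝ | ∃ V1 : Finset V, V1.Nonempty ∧
    x = (frusIdx G w s V1 + bdry G w V1) / vol μ V1 }

/-- Maximal `μ`-degree `d_μ`. -/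
noncomputable def dmu {V : Type*} [Fintype V] (G : SimpleGraph V) [DecidableRel G.Adj]
    (w : V → V → ℝ) (μ : V → ℝ) : ℝ :=
  ⨆ u : V, (∑ v : V, if G.Adj u v then w u v else 0) / μ u

/-!
The Rayleigh quotient is invariant under scaling, so `λ₁` is its minimum over the compact unit
sphere; hence `λ₁ = 0` iff some `f ≠ 0` has vanishing Dirichlet form, i.e. `f u = s u v * f v`
along every edge. Such an `f` vanishes nowhere on the component of any point where it is nonzero,
and since `|s| = 1` its modulus is constant along edges, so `σ = f / |f|` switches `s` to the
trivial signature there. Conversely, a switching function of a balanced component, extended by `0`,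
is such an `f`.
-/

namespace MagneticLaplacian

section Kernel

variable {V : Type*} {G : SimpleGraph V} {s : V → V → ℂ}

/-- The functions annihilated by the magnetic Laplacian `Δ_μ^s`. -/
def IsParallel (G : SimpleGraph V) (s : V → V → ℂ) (f : V → ℂ) : Prop :=
  ∀ u v, G.Adj u v → f u = s u v * f v

theorem IsParallel.ne_zero_of_reachable {f : V → ℂ} (hf : IsParallel G s f) {a b : V}
    (hab : G.Reachable a b) (ha : f a ≠ 0) : f b ≠ 0 := by
  obtain ⟨p⟩ := hab
  induction p with
  | nil => exact ha
  | cons h _ ih => exact ih (right_ne_zero_of_mul (hf _ _ h ▸ ha))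

theorem IsParallel.exists_balanced_component (hs_unit : ∀ u v, G.Adj u v → ‖s u v‖ = 1)
    {f : V → ℂ} (hpar : IsParallel G s f) (hf : f ≠ 0) :
    ∃ c : G.ConnectedComponent, ∃ σ : V → ℂ, (∀ u, ‖σ u‖ = 1) ∧
      ∀ u v, G.Adj u v → G.connectedComponentMk u = c → s u v = σ u * (σ v)⁻¹ := by
  obtain ⟨v₀, hv₀⟩ := Function.ne_iff.mp hf
  refine ⟨G.connectedComponentMk v₀, fun u => if f u = 0 then 1 else f u / ‖f u‖,
    fun u => ?_, fun u v huv hu => ?_⟩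
  · dsimp only
    split_ifs with h
    · exact norm_one
    · rw [norm_div, Complex.norm_real, norm_norm, div_self (norm_ne_zero_iff.mpr h)]
  · have hu0 : f u ≠ 0 :=
      hpar.ne_zero_of_reachable (SimpleGraph.ConnectedComponent.exact hu).symm hv₀
    have hv0 : f v ≠ 0 := right_ne_zero_of_mul (hpar u v huv ▸ hu0)
    have hnorm : ‖f u‖ = ‖f v‖ := by rw [hpar u v huv, norm_mul, hs_unit u v huv, one_mul]
    have hfv : (‖f v‖ : ℂ) ≠ 0 := Complex.ofReal_ne_zero.mpr (norm_ne_zero_iff.mpr hv0)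
    simp only [if_neg hu0, if_neg hv0, hnorm]
    rw [hpar u v huv]
    field_simp

theorem exists_isParallel_of_balanced_component (c : G.ConnectedComponent) {σ : V → ℂ}
    (hσ : ∀ u, σ u ≠ 0)
    (hbal : ∀ u v, G.Adj u v → G.connectedComponentMk u = c → s u v = σ u * (σ v)⁻¹) :
    ∃ f : V → ℂ, f ≠ 0 ∧ IsParallel G s f := by
  classical
  obtain ⟨u₀, rfl⟩ := c.exists_rep
  refine ⟨fun u => if G.connectedComponentMk u = G.connectedComponentMk u₀ then σ u else 0,
    Function.ne_iff.mpr ⟨u₀, by simpa using hσ u₀⟩, fun u v huv => ?_⟩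
  have hcomp : G.connectedComponentMk u = G.connectedComponentMk v :=
    SimpleGraph.ConnectedComponent.sound huv.reachable
  dsimp only
  rw [hcomp]
  split_ifs with hv
  · rw [hbal u v huv (hcomp.trans hv), inv_mul_cancel_right₀ (hσ v)]
  · rw [mul_zero]

theorem exists_isParallel_iff_exists_balanced_component
    (hs_unit : ∀ u v, G.Adj u v → ‖s u v‖ = 1) :
    (∃ f : V → ℂ, f ≠ 0 ∧ IsParallel G s f) ↔
      ∃ c : G.ConnectedComponent, ∃ σ : V → ℂ, (∀ u, ‖σ u‖ = 1) ∧
        ∀ u v, G.Adj u v → G.connectedComponentMk u = c → s u v = σ u * (σ v)⁻¹ :=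
  ⟨fun ⟨_, hf, hpar⟩ => hpar.exists_balanced_component hs_unit hf,
    fun ⟨c, _, hσ, hbal⟩ => exists_isParallel_of_balanced_component c
      (fun u => norm_ne_zero_iff.mp (hσ u ▸ one_ne_zero)) hbal⟩

end Kernel

section Rayleigh

variable {V : Type*} {G : SimpleGraph V} [DecidableRel G.Adj]
  {w : V → V → ℝ} {μ : V → ℝ} {s : V → V → ℂ}

theorem edgeTerm_nonneg (hw : ∀ u v, G.Adj u v → 0 ≤ w u v) (f : V → ℂ) (u v : V) :
    0 ≤ if G.Adj u v then w u v * ‖f u - s u v * f v‖ ^ 2 else 0 := by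
  split_ifs with h
  · exact mul_nonneg (hw u v h) (sq_nonneg _)
  · exact le_rfl

variable [Fintype V]

variable (G w s) in
noncomputable def dirichletForm (f : V → ℂ) : ℝ :=
  (1 / 2) * ∑ u : V, ∑ v : V, if G.Adj u v then w u v * ‖f u - s u v * f v‖ ^ 2 else 0

variable (μ) in
noncomputable def weightedNormSq (f : V → ℂ) : ℝ := ∑ u : V, ‖f u‖ ^ 2 * μ u

variable (G w μ s) in
theorem rayleigh_eq_div (f : V → ℂ) :
    rayleigh G w μ s f = dirichletForm G w s f / weightedNormSq μ f := rfl

theorem dirichletForm_nonneg (hw : ∀ u v, G.Adj u v → 0 ≤ w u v) (f : V → ℂ) :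
    0 ≤ dirichletForm G w s f :=
  mul_nonneg (by norm_num) <|
    sum_nonneg fun u _ => sum_nonneg fun v _ => edgeTerm_nonneg hw f u v

theorem dirichletForm_eq_zero_iff (hw : ∀ u v, G.Adj u v → 0 < w u v) (f : V → ℂ) :
    dirichletForm G w s f = 0 ↔ IsParallel G s f := by
  have hw' : ∀ u v, G.Adj u v → 0 ≤ w u v := fun u v h => (hw u v h).le
  rw [dirichletForm, mul_eq_zero, or_iff_right (by norm_num),
    sum_eq_zero_iff_of_nonneg fun u _ => sum_nonneg fun v _ => edgeTerm_nonneg hw' f u v]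
  simp only [mem_univ, forall_const]
  refine forall_congr' fun u => ?_
  rw [sum_eq_zero_iff_of_nonneg fun v _ => edgeTerm_nonneg hw' f u v]
  simp only [mem_univ, forall_const]
  refine forall_congr' fun v => ?_
  by_cases h : G.Adj u v
  · simp [h, (hw u v h).ne', sub_eq_zero]
  · simp [h]

theorem weightedNormSq_pos (hμ : ∀ u, 0 < μ u) {f : V → ℂ} (hf : f ≠ 0) :
    0 < weightedNormSq μ f := by
  obtain ⟨u, hu⟩ := Function.ne_iff.mp hf
  exact sum_pos' (fun v _ => mul_nonneg (sq_nonneg _) (hμ v).le)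
    ⟨u, mem_univ u, mul_pos (pow_pos (norm_pos_iff.mpr hu) 2) (hμ u)⟩

theorem dirichletForm_smul (c : ℂ) (f : V → ℂ) :
    dirichletForm G w s (c • f) = ‖c‖ ^ 2 * dirichletForm G w s f := by
  have h : ∀ u v, c • f u - s u v * c • f v = c * (f u - s u v * f v) := fun u v => by
    simp only [smul_eq_mul]; ring
  simp only [dirichletForm, Pi.smul_apply, h, norm_mul, mul_pow, mul_sum]
  apply sum_congr rfl
  intro u _
  apply sum_congr rfl
  intro v _
  split_ifs <;> ring

theorem weightedNormSq_smul (c : ℂ) (f : V → ℂ) :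
    weightedNormSq μ (c • f) = ‖c‖ ^ 2 * weightedNormSq μ f := by
  simp only [weightedNormSq, Pi.smul_apply, norm_smul, mul_pow, mul_sum, mul_assoc]

theorem rayleigh_smul {c : ℂ} (hc : c ≠ 0) (f : V → ℂ) :
    rayleigh G w μ s (c • f) = rayleigh G w μ s f := by
  rw [rayleigh_eq_div, rayleigh_eq_div, dirichletForm_smul, weightedNormSq_smul,
    mul_div_mul_left _ _ (pow_ne_zero 2 (norm_ne_zero_iff.mpr hc))]

theorem rayleigh_nonneg (hw : ∀ u v, G.Adj u v → 0 ≤ w u v) (hμ : ∀ u, 0 ≤ μ u)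
    (f : V → ℂ) : 0 ≤ rayleigh G w μ s f :=
  div_nonneg (dirichletForm_nonneg hw f) (sum_nonneg fun u _ => mul_nonneg (sq_nonneg _) (hμ u))

theorem rayleigh_eq_zero_iff (hw : ∀ u v, G.Adj u v → 0 < w u v) (hμ : ∀ u, 0 < μ u)
    {f : V → ℂ} (hf : f ≠ 0) :
    rayleigh G w μ s f = 0 ↔ IsParallel G s f := by
  rw [rayleigh_eq_div, div_eq_zero_iff, or_iff_left (weightedNormSq_pos hμ hf).ne',
    dirichletForm_eq_zero_iff hw]

theorem continuousOn_rayleigh (hμ : ∀ u, 0 < μ u) :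
    ContinuousOn (rayleigh G w μ s) {0}ᶜ := by
  refine ContinuousOn.div (Continuous.continuousOn ?_) (Continuous.continuousOn ?_)
    fun f hf => (weightedNormSq_pos hμ hf).ne'
  · refine continuous_const.mul (continuous_finsetSum _ fun u _ =>
      continuous_finsetSum _ fun v _ => ?_)
    split_ifs
    · fun_prop
    · exact continuous_const
  · exact continuous_finsetSum _ fun u _ => by fun_prop

theorem exists_rayleigh_eq_lam1 [Nonempty V] (hμ : ∀ u, 0 < μ u) :
    ∃ f ≠ 0, rayleigh G w μ s f = lam1 G w μ s := by
  obtain ⟨g, hg, hmin⟩ := (isCompact_sphere (0 : V → ℂ) 1).exists_isMinOn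
    (NormedSpace.sphere_nonempty.mpr zero_le_one)
    ((continuousOn_rayleigh (G := G) (w := w) (s := s) hμ).mono
      fun f hf => Metric.ne_of_mem_sphere hf one_ne_zero)
  have hg0 : g ≠ 0 := Metric.ne_of_mem_sphere hg one_ne_zero
  refine ⟨g, hg0, Eq.symm (IsLeast.csInf_eq ⟨⟨g, hg0, rfl⟩, ?_⟩)⟩
  rintro _ ⟨f, hf, rfl⟩
  rw [← rayleigh_smul (inv_ne_zero (Complex.ofReal_ne_zero.mpr (norm_ne_zero_iff.mpr hf))) f]
  exact hmin (mem_sphere_zero_iff_norm.mpr (norm_smul_inv_norm hf))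

theorem lam1_eq_zero_iff [Nonempty V] (hw : ∀ u v, G.Adj u v → 0 < w u v)
    (hμ : ∀ u, 0 < μ u) :
    lam1 G w μ s = 0 ↔ ∃ f : V → ℂ, f ≠ 0 ∧ IsParallel G s f := by
  constructor
  · intro h
    obtain ⟨f, hf, hf_min⟩ := exists_rayleigh_eq_lam1 (G := G) (w := w) (s := s) hμ
    exact ⟨f, hf, (rayleigh_eq_zero_iff hw hμ hf).mp (hf_min.trans h)⟩
  · rintro ⟨f, hf, hpar⟩
    refine IsLeast.csInf_eq ⟨⟨f, hf, ((rayleigh_eq_zero_iff hw hμ hf).mpr hpar).symm⟩, ?_⟩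
    rintro _ ⟨g, -, rfl⟩
    exact rayleigh_nonneg (fun u v h => (hw u v h).le) (fun u => (hμ u).le) g

end Rayleigh

end MagneticLaplacian

theorem stmt_13_general {V : Type*} [Fintype V] [Nonempty V] (G : SimpleGraph V) [DecidableRel G.Adj]
    (w : V → V → ℝ) (μ : V → ℝ) (s : V → V → ℂ)
    (hw_pos : ∀ u v, G.Adj u v → 0 < w u v)
    (hμ : ∀ u, 0 < μ u)
    (hs_unit : ∀ u v, G.Adj u v → ‖s u v‖ = 1) :
    lam1 G w μ s = 0 ↔
      ∃ c : G.ConnectedComponent, ∃ σ : V → ℂ, (∀ u, ‖σ u‖ = 1) ∧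
        ∀ u v, G.Adj u v → G.connectedComponentMk u = c → s u v = σ u * (σ v)⁻¹ :=
  (MagneticLaplacian.lam1_eq_zero_iff hw_pos hμ).trans
    (MagneticLaplacian.exists_isParallel_iff_exists_balanced_component hs_unit)

theorem stmt_13 {V : Type*} [Fintype V] [Nonempty V] (G : SimpleGraph V) [DecidableRel G.Adj]
    (w : V → V → ℝ) (μ : V → ℝ) (s : V → V → ℂ)
    (hw_sym : ∀ u v, w u v = w v u)
    (hw_pos : ∀ u v, G.Adj u v → 0 < w u v)
    (hμ : ∀ u, 0 < μ u)
    (hs_unit : ∀ u v, G.Adj u v → ‖s u v‖ = 1)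
    (hs_inv : ∀ u v, G.Adj u v → s v u = (s u v)⁻¹) :
    lam1 G w μ s = 0 ↔
      ∃ c : G.ConnectedComponent, ∃ σ : V → ℂ, (∀ u, ‖σ u‖ = 1) ∧
        ∀ u v, G.Adj u v → G.connectedComponentMk u = c → s u v = σ u * (σ v)⁻¹ :=
  stmt_13_general G w μ s hw_pos hμ hs_unit
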